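/- arXiv:1801.02092 — 3 statements merged into one kernel-verified Lean document; each statement's English description precedes it below -/
import Mathlib

section
/- For every integer m ≥ 3, the equation 1 + Q^m − m(1 − Q²)/2 = 0 has a unique solution Q_m in the interval [0, 1); moreover the sequence (Q_m)_{m≥3} is strictly increasing and converges to 1 as m → ∞. -/
open Filter

private noncomputable def fL (m : ℕ) (Q : ℝ) : ℝ := 1 + Q ^ m - (m : ℝ) * (1 - Q ^ 2) / 2

private lemma fL_strictMonoOn (m : ℕ) (hm : 1 ≤ m) :
    StrictMonoOn (fL m) (Set.Icc (0:ℝ) 1) := by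
  intro x hx y hy hxy
  have h1 : x ^ m < y ^ m := pow_lt_pow_left₀ hxy hx.1 (by omega)
  have h2 : x ^ 2 ≤ y ^ 2 := by nlinarith [hx.1]
  have hmpos : (1:ℝ) ≤ m := by exact_mod_cast hm
  simp only [fL]
  nlinarith

private lemma exists_root (m : ℕ) (hm : 3 ≤ m) :
    ∃ Q, Q ∈ Set.Ico (0:ℝ) 1 ∧ fL m Q = 0 := by
  have hcont : Continuous (fL m) := by unfold fL; continuity
  have hm3 : (3:ℝ) ≤ m := by exact_mod_cast hm
  have h0 : fL m 0 ≤ 0 := by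
    simp only [fL, zero_pow (by omega : m ≠ 0)]
    nlinarith
  have h1 : fL m 1 = 2 := by simp [fL]; norm_num
  obtain ⟨Q, hQ, hfQ⟩ := intermediate_value_Icc (by norm_num : (0:ℝ) ≤ 1)
    hcont.continuousOn (show (0:ℝ) ∈ Set.Icc (fL m 0) (fL m 1) from ⟨h0, by rw [h1]; norm_num⟩)
  refine ⟨Q, ⟨hQ.1, ?_⟩, hfQ⟩
  rcases lt_or_eq_of_le hQ.2 with h | h
  · exact h
  · exfalso; rw [h, h1] at hfQ; norm_num at hfQ

private lemma root_lb (m : ℕ) (hm : 3 ≤ m) {Q : ℝ} (hQ : Q ∈ Set.Ico (0:ℝ) 1)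
    (hf : fL m Q = 0) : 1 - 4 / (m : ℝ) ≤ Q := by
  have hmpos : (0:ℝ) < m := by positivity
  have hQm : Q ^ m ≤ 1 := pow_le_one₀ hQ.1 hQ.2.le
  have hQm0 : 0 ≤ Q ^ m := pow_nonneg hQ.1 m
  simp only [fL] at hf
  have h4 : 4 / (m:ℝ) * m = 4 := div_mul_cancel₀ _ hmpos.ne'
  nlinarith [hQ.1, hQ.2, mul_nonneg hQ.1 (sub_nonneg.mpr hQ.2.le)]

/-- For every `m ≥ 3` the equation `1 + Q^m − m(1−Q²)/2 = 0` has a unique solution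
`Q_m ∈ [0,1)`; the sequence `(Q_m)` is strictly increasing and converges to `1`. -/
theorem love_instability_points :
    ∃ Qs : ℕ → ℝ,
      (∀ m : ℕ, 3 ≤ m →
        (Qs m ∈ Set.Ico (0:ℝ) 1 ∧ 1 + Qs m ^ m - (m : ℝ) * (1 - Qs m ^ 2) / 2 = 0) ∧
        (∀ Q : ℝ, Q ∈ Set.Ico (0:ℝ) 1 → 1 + Q ^ m - (m : ℝ) * (1 - Q ^ 2) / 2 = 0 →
          Q = Qs m)) ∧
      (∀ m : ℕ, 3 ≤ m → Qs m < Qs (m + 1)) ∧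
      Tendsto Qs atTop (nhds 1) := by
  classical
  set Qs : ℕ → ℝ := fun m => if h : 3 ≤ m then (exists_root m h).choose else 0 with hQs
  have hmem : ∀ m : ℕ, 3 ≤ m → Qs m ∈ Set.Ico (0:ℝ) 1 := by
    intro m hm; simp only [hQs, dif_pos hm]; exact (exists_root m hm).choose_spec.1
  have hroot : ∀ m : ℕ, 3 ≤ m → fL m (Qs m) = 0 := by
    intro m hm; simp only [hQs, dif_pos hm]; exact (exists_root m hm).choose_spec.2
  refine ⟨Qs, ?_, ?_, ?_⟩
  · intro m hm
    refine ⟨⟨hmem m hm, hroot m hm⟩, ?_⟩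
    intro Q hQ hf
    have := fL_strictMonoOn m (by omega)
    exact this.injOn (Set.Icc_subset_Icc_right le_rfl (Set.Ico_subset_Icc_self hQ))
      (Set.Ico_subset_Icc_self (hmem m hm)) (by rw [show fL m Q = 0 from hf, hroot m hm])
  · intro m hm
    have hm' : 3 ≤ m + 1 := by omega
    have hA := hmem m hm
    have hB := hmem (m + 1) hm'
    have hfA := hroot m hm
    have hfB := hroot (m + 1) hm'
    have hmono := fL_strictMonoOn (m + 1) (by omega)
    -- show fL (m+1) (Qs m) < fL (m+1) (Qs (m+1)) = 0
    have key : fL (m + 1) (Qs m) < 0 := by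
      set q := Qs m
      have hq0 : 0 ≤ q := hA.1
      have hq1 : q < 1 := hA.2
      have hqm : 0 ≤ q ^ m := pow_nonneg hq0 m
      simp only [fL] at hfA ⊢
      push_cast
      have hpow : q ^ (m + 1) = q ^ m * q := pow_succ q m
      nlinarith [mul_nonneg hqm (sub_nonneg.mpr hq1.le)]
    have : fL (m + 1) (Qs m) < fL (m + 1) (Qs (m + 1)) := by rw [hfB]; exact key
    by_contra h
    push_neg at h
    have := hmono.monotoneOn (Set.Ico_subset_Icc_self hB) (Set.Ico_subset_Icc_self hA) h
    linarith
  · have hlow : Tendsto (fun m : ℕ => 1 - 4 / (m : ℝ)) atTop (nhds 1) := by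
      have : Tendsto (fun m : ℕ => 4 / (m : ℝ)) atTop (nhds 0) :=
        tendsto_const_nhds.div_atTop tendsto_natCast_atTop_atTop
      simpa using tendsto_const_nhds.sub this
    refine tendsto_of_tendsto_of_tendsto_of_le_of_le' hlow tendsto_const_nhds ?_ ?_
    · filter_upwards [eventually_ge_atTop 3] with m hm
      exact root_lb m hm (hmem m hm) (hroot m hm)
    · filter_upwards [eventually_ge_atTop 3] with m hm
      exact (hmem m hm).2.le
end

section
/- (Separation of perturbed hyperbola branches.) Let a, c̃ > 0, b̃ > 0, and let ψ̂(ε, Q, X) = a ε² − c̃ X² + b̃ Q² + R(ε, Q, X) where R is continuous near 0, |R(ε,Q,X)| ≤ M(|ε| + |Q| + |X|)³, and R is Lipschitz in X with |R(ε,Q,X) − R(ε,Q,X')| ≤ M(ε² + Q² + X² + X'²)|X − X'| near the origin. Then there exist η > 0 and ε₀ > 0 such that for every ε with 0 < ε ≤ ε₀ and every Q with |Q| ≤ η ε^{5/6}, the equation ψ̂(ε, Q, X) = 0 has exactly two solutions X_±(Q) with |X_±(Q) ∓ √((a/c̃)ε² + (b̃/c̃)Q²)| ≤ η ε^{3/2};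 these solutions depend continuously on Q and satisfy X_+(Q) − X_−(Q) ≥ C ε for some constant C > 0. -/
open Set

set_option maxHeartbeats 1000000

private lemma core_branch (a c b M : ℝ)
    (ha : 0 < a) (hc : 0 < c) (hb : 0 < b) (hM : 0 < M)
    (R : ℝ → ℝ → ℝ → ℝ) (ρ : ℝ) (hρ : 0 < ρ)
    (hRcont : ContinuousOn (fun p : ℝ × ℝ × ℝ => R p.1 p.2.1 p.2.2)
      (Icc (-ρ) ρ ×ˢ Icc (-ρ) ρ ×ˢ Icc (-ρ) ρ))
    (hRbound : ∀ ε Q X : ℝ, |ε| ≤ ρ → |Q| ≤ ρ → |X| ≤ ρ →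
      |R ε Q X| ≤ M * (|ε| + |Q| + |X|) ^ 3)
    (hRlip : ∀ ε Q X X' : ℝ, |ε| ≤ ρ → |Q| ≤ ρ → |X| ≤ ρ → |X'| ≤ ρ →
      |R ε Q X - R ε Q X'| ≤ M * (ε ^ 2 + Q ^ 2 + X ^ 2 + X' ^ 2) * |X - X'|) :
    ∃ η₀ : ℝ, 0 < η₀ ∧ ∀ η : ℝ, 0 < η → η ≤ η₀ →
      ∃ ε₀ : ℝ, 0 < ε₀ ∧ ∀ ε : ℝ, 0 < ε → ε ≤ ε₀ →
        ∃ Xp : ℝ → ℝ,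
          ContinuousOn Xp (Icc (-(η * ε ^ ((5:ℝ)/6))) (η * ε ^ ((5:ℝ)/6))) ∧
          ∀ Q : ℝ, |Q| ≤ η * ε ^ ((5:ℝ)/6) →
            (a * ε ^ 2 - c * (Xp Q) ^ 2 + b * Q ^ 2 + R ε Q (Xp Q) = 0 ∧
             |Xp Q - Real.sqrt ((a / c) * ε ^ 2 + (b / c) * Q ^ 2)| ≤ η * ε ^ ((3:ℝ)/2)) ∧
            ∀ X : ℝ, a * ε ^ 2 - c * X ^ 2 + b * Q ^ 2 + R ε Q X = 0 →
              |X - Real.sqrt ((a / c) * ε ^ 2 + (b / c) * Q ^ 2)| ≤ η * ε ^ ((3:ℝ)/2) →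
              X = Xp Q := by
  have hac : (0:ℝ) < a / c := by positivity
  have hbc : (0:ℝ) < b / c := by positivity
  obtain ⟨A, hAdef⟩ : ∃ A : ℝ, A = Real.sqrt (a / c) := ⟨_, rfl⟩
  obtain ⟨B, hBdef⟩ : ∃ B : ℝ, B = Real.sqrt (b / c) := ⟨_, rfl⟩
  have hA : 0 < A := hAdef ▸ Real.sqrt_pos.mpr hac
  have hA2 : A ^ 2 = a / c := hAdef ▸ Real.sq_sqrt hac.le
  have hB : 0 < B := hBdef ▸ Real.sqrt_pos.mpr hbc
  have hB2 : B ^ 2 = b / c := hBdef ▸ Real.sq_sqrt hbc.le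
  obtain ⟨K₀, hK₀def⟩ : ∃ K₀ : ℝ, K₀ = A + B + 1 := ⟨_, rfl⟩
  have hK₀ : 0 < K₀ := by rw [hK₀def]; positivity
  obtain ⟨P, hPdef⟩ : ∃ P : ℝ, P = 1 + A := ⟨_, rfl⟩
  have hP : 0 < P := by rw [hPdef]; positivity
  obtain ⟨S, hSdef⟩ : ∃ S : ℝ, S = 2 + B := ⟨_, rfl⟩
  have hS : 0 < S := by rw [hSdef]; positivity
  obtain ⟨L, hLdef⟩ : ∃ L : ℝ, L = M * (2 + 2 * K₀ ^ 2) := ⟨_, rfl⟩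
  have hL : 0 < L := by rw [hLdef]; positivity
  refine ⟨min 1 (Real.sqrt (c * A / (8 * M * S ^ 3))),
    lt_min one_pos (Real.sqrt_pos.mpr (by positivity)), ?_⟩
  intro η hη hηle
  have hη1 : η ≤ 1 := hηle.trans (min_le_left _ _)
  have hη2 : 4 * M * S ^ 3 * η ^ 2 ≤ c * A / 2 := by
    have h1 : η ≤ Real.sqrt (c * A / (8 * M * S ^ 3)) := hηle.trans (min_le_right _ _)
    have h2 : η ^ 2 ≤ c * A / (8 * M * S ^ 3) := by
      have h2' : η ^ 2 ≤ (Real.sqrt (c * A / (8 * M * S ^ 3))) ^ 2 := pow_le_pow_left₀ hη.le h1 2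
      rwa [Real.sq_sqrt (show (0:ℝ) ≤ c * A / (8 * M * S ^ 3) by positivity)] at h2'
    rw [le_div_iff₀ (show (0:ℝ) < 8 * M * S ^ 3 by positivity)] at h2
    linarith only [h2]
  obtain ⟨m, hmdef⟩ : ∃ m : ℝ,
      m = min 1 (min (c*A*η/(8*M*P^3)) (min (A/2) (min (c*A/(2*L)) (min ρ (ρ/K₀))))) := ⟨_, rfl⟩
  have hm : 0 < m := by
    rw [hmdef]
    refine lt_min one_pos (lt_min (by positivity) (lt_min (by positivity)
      (lt_min (by positivity) (lt_min hρ (by positivity)))))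
  refine ⟨m ^ 6, by positivity, ?_⟩
  intro ε hε hεle
  obtain ⟨t, htdef⟩ : ∃ t : ℝ, t = ε ^ ((1:ℝ)/6) := ⟨_, rfl⟩
  have ht : 0 < t := htdef ▸ Real.rpow_pos_of_pos hε _
  have htm : t ≤ m := by
    rw [htdef]
    calc ε ^ ((1:ℝ)/6) ≤ (m ^ 6) ^ ((1:ℝ)/6) := Real.rpow_le_rpow hε.le hεle (by norm_num)
      _ = m := by rw [← Real.rpow_natCast m 6, ← Real.rpow_mul hm.le]; norm_num
  have htpow : ∀ n : ℕ, t ^ n = ε ^ ((n : ℝ)/6) := by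
    intro n
    rw [htdef, ← Real.rpow_natCast (ε ^ ((1:ℝ)/6)) n, ← Real.rpow_mul hε.le]
    ring_nf
  have ht6 : t ^ 6 = ε := by rw [htpow 6]; norm_num
  have h56 : ε ^ ((5:ℝ)/6) = t ^ 5 := by rw [htpow 5]; norm_num
  have h32 : ε ^ ((3:ℝ)/2) = t ^ 9 := by rw [htpow 9]; norm_num
  have ht1 : t ≤ 1 := htm.trans (by rw [hmdef]; exact min_le_left _ _)
  have htc2 : t ≤ c*A*η/(8*M*P^3) := htm.trans (by
    rw [hmdef]; exact (min_le_right _ _).trans (min_le_left _ _))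
  have htc3 : t ≤ A/2 := htm.trans (by
    rw [hmdef]; exact (min_le_right _ _).trans ((min_le_right _ _).trans (min_le_left _ _)))
  have htc4 : t ≤ c*A/(2*L) := htm.trans (by
    rw [hmdef]
    exact (min_le_right _ _).trans ((min_le_right _ _).trans
      ((min_le_right _ _).trans (min_le_left _ _))))
  have htρ : t ≤ ρ := htm.trans (by
    rw [hmdef]
    exact (min_le_right _ _).trans ((min_le_right _ _).trans
      ((min_le_right _ _).trans ((min_le_right _ _).trans (min_le_left _ _)))))
  have htρK : t ≤ ρ/K₀ := htm.trans (by
    rw [hmdef]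
    exact (min_le_right _ _).trans ((min_le_right _ _).trans
      ((min_le_right _ _).trans ((min_le_right _ _).trans (min_le_right _ _)))))
  have htk : ∀ k : ℕ, 1 ≤ k → t ^ k ≤ t := by
    intro k hk
    calc t ^ k ≤ t ^ 1 := pow_le_pow_of_le_one ht.le ht1 hk
      _ = t := pow_one t
  have hp65 : t^6 ≤ t^5 := pow_le_pow_of_le_one ht.le ht1 (by norm_num)
  have hp95 : t^9 ≤ t^5 := pow_le_pow_of_le_one ht.le ht1 (by norm_num)
  have hp1210 : t^12 ≤ t^10 := pow_le_pow_of_le_one ht.le ht1 (by norm_num)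
  have hηt3 : η * t^3 ≤ A/2 := by
    calc η * t^3 ≤ 1 * t^3 := mul_le_mul_of_nonneg_right hη1 (pow_pos ht 3).le
      _ = t^3 := one_mul _
      _ ≤ t := htk 3 (by norm_num)
      _ ≤ A/2 := htc3
  have h91 : η*t^9 ≤ (A/2)*t^6 := by
    calc η*t^9 = (η*t^3)*t^6 := by ring
      _ ≤ (A/2)*t^6 := mul_le_mul_of_nonneg_right hηt3 (pow_pos ht 6).le
  have h95 : η*t^9 ≤ η*t^5 := mul_le_mul_of_nonneg_left hp95 hη.le
  have hη51 : η*t^5 ≤ t^5 := by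
    calc η*t^5 ≤ 1*t^5 := mul_le_mul_of_nonneg_right hη1 (pow_pos ht 5).le
      _ = t^5 := one_mul _
  -- basic facts about s
  have hs_nonneg : ∀ Q : ℝ, 0 ≤ Real.sqrt ((a/c)*ε^2 + (b/c)*Q^2) := fun _ => Real.sqrt_nonneg _
  have hs_sq : ∀ Q : ℝ, c * (Real.sqrt ((a/c)*ε^2 + (b/c)*Q^2))^2 = a*ε^2 + b*Q^2 := by
    intro Q
    rw [Real.sq_sqrt (by positivity)]
    field_simp
  have hs_lb : ∀ Q : ℝ, A * t^6 ≤ Real.sqrt ((a/c)*ε^2 + (b/c)*Q^2) := by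
    intro Q
    rw [ht6, hAdef]
    have h1 : Real.sqrt (a/c) * ε = Real.sqrt ((a/c) * ε^2) := by
      rw [Real.sqrt_mul hac.le (ε^2), Real.sqrt_sq hε.le]
    rw [h1]
    exact Real.sqrt_le_sqrt (le_add_of_nonneg_right (by positivity))
  have hs_ub : ∀ Q : ℝ, |Q| ≤ η*t^5 →
      Real.sqrt ((a/c)*ε^2 + (b/c)*Q^2) ≤ A*t^6 + B*(η*t^5) := by
    intro Q hQ
    have e : (A*ε + B*|Q|)^2 = (a/c)*ε^2 + (b/c)*Q^2 + 2*(A*B*ε*|Q|) := by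
      rw [← hA2, ← hB2, ← sq_abs Q]; ring
    have h1 : (a/c)*ε^2 + (b/c)*Q^2 ≤ (A*ε + B*|Q|)^2 := by
      linarith only [e,
        mul_nonneg (mul_nonneg (mul_nonneg hA.le hB.le) hε.le) (abs_nonneg Q)]
    calc Real.sqrt ((a/c)*ε^2 + (b/c)*Q^2) ≤ Real.sqrt ((A*ε + B*|Q|)^2) := Real.sqrt_le_sqrt h1
      _ = A*ε + B*|Q| := Real.sqrt_sq (by positivity)
      _ ≤ A*t^6 + B*(η*t^5) := by
          rw [← ht6]
          linarith only [mul_le_mul_of_nonneg_left hQ hB.le]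
  have hερ : |ε| ≤ ρ := by
    rw [abs_of_pos hε, ← ht6]
    exact (htk 6 (by norm_num)).trans htρ
  have hQρ : ∀ Q : ℝ, |Q| ≤ η*t^5 → |Q| ≤ ρ := by
    intro Q hQ
    have h5 : t^5 ≤ t := htk 5 (by norm_num)
    linarith only [hQ, hη51, h5, htρ]
  have hXbound : ∀ Q X : ℝ, |Q| ≤ η*t^5 → |X - Real.sqrt ((a/c)*ε^2 + (b/c)*Q^2)| ≤ η*t^9 →
      (A/2)*t^6 ≤ X ∧ |X| ≤ K₀ * t^5 ∧ |X| ≤ ρ := by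
    intro Q X hQ hX
    obtain ⟨hX1, hX2⟩ := abs_le.mp hX
    have hlb := hs_lb Q
    have hub := hs_ub Q hQ
    have hXlb : (A/2)*t^6 ≤ X := by linarith only [hX1, hlb, h91]
    have hXub : X ≤ K₀ * t^5 := by
      rw [hK₀def]
      have h95' : η*t^9 ≤ t^5 := h95.trans hη51
      have hA6 : A*t^6 ≤ A*t^5 := mul_le_mul_of_nonneg_left hp65 hA.le
      have hBη : B*(η*t^5) ≤ B*t^5 := mul_le_mul_of_nonneg_left hη51 hB.le
      have : X ≤ A*t^6 + B*(η*t^5) + η*t^9 := by linarith only [hX2, hub]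
      linarith only [this, h95', hA6, hBη]
    have hXpos : 0 < X := lt_of_lt_of_le (by positivity) hXlb
    refine ⟨hXlb, by rw [abs_of_pos hXpos]; exact hXub, ?_⟩
    rw [abs_of_pos hXpos]
    have h6 : t^5 ≤ ρ/K₀ := (htk 5 (by norm_num)).trans htρK
    calc X ≤ K₀ * t^5 := hXub
      _ ≤ K₀ * (ρ/K₀) := mul_le_mul_of_nonneg_left h6 hK₀.le
      _ = ρ := by field_simp
  have hRsmall : ∀ Q X : ℝ, |Q| ≤ η*t^5 →
      |X - Real.sqrt ((a/c)*ε^2 + (b/c)*Q^2)| ≤ η*t^9 →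
      |R ε Q X| ≤ c*A*η*t^15 := by
    intro Q X hQ hX
    obtain ⟨hXpos, hXK, hXρ⟩ := hXbound Q X hQ hX
    have h1 := hRbound ε Q X hερ (hQρ Q hQ) hXρ
    have habs : |ε| + |Q| + |X| ≤ P * t^6 + S * (η*t^5) := by
      obtain ⟨hX1, hX2⟩ := abs_le.mp hX
      have hub := hs_ub Q hQ
      have hXpos' : 0 < X := lt_of_lt_of_le (by positivity) hXpos
      rw [abs_of_pos hε, ← ht6, abs_of_pos hXpos', hPdef, hSdef]
      have hX3 : X ≤ A*t^6 + B*(η*t^5) + η*t^5 := by linarith only [hX2, hub, h95]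
      linarith only [hX3, hQ]
    have h0 : 0 ≤ |ε| + |Q| + |X| := by positivity
    have hu : (0:ℝ) ≤ P * t^6 := by positivity
    have hv : (0:ℝ) ≤ S * (η*t^5) := by positivity
    have hcube : (|ε| + |Q| + |X|)^3 ≤ 4*(P*t^6)^3 + 4*(S*(η*t^5))^3 := by
      have h2 : (|ε| + |Q| + |X|)^3 ≤ (P*t^6 + S*(η*t^5))^3 := pow_le_pow_left₀ h0 habs 3
      linarith only [h2, mul_nonneg (add_nonneg hu hv) (sq_nonneg (P*t^6 - S*(η*t^5)))]
    have h2 : 4*M*(P*t^6)^3 ≤ (c*A*η/2) * t^15 := by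
      have h3 : t^3 ≤ c*A*η/(8*M*P^3) := (htk 3 (by norm_num)).trans htc2
      rw [le_div_iff₀ (by positivity)] at h3
      linarith only [mul_le_mul_of_nonneg_right h3 (pow_pos ht 15).le]
    have h4 : 4*M*(S*(η*t^5))^3 ≤ (c*A*η/2) * t^15 := by
      linarith only [mul_le_mul_of_nonneg_right hη2 (mul_pos hη (pow_pos ht 15)).le]
    calc |R ε Q X| ≤ M * (|ε| + |Q| + |X|)^3 := h1
      _ ≤ 4*M*(P*t^6)^3 + 4*M*(S*(η*t^5))^3 := by
          linarith only [mul_le_mul_of_nonneg_left hcube hM.le]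
      _ ≤ c*A*η*t^15 := by linarith only [h2, h4]
  have hRlipS : ∀ Q X X' : ℝ, |Q| ≤ η*t^5 → |X| ≤ K₀*t^5 → |X| ≤ ρ →
      |X'| ≤ K₀*t^5 → |X'| ≤ ρ →
      |R ε Q X - R ε Q X'| ≤ (c*A/2) * t^6 * |X - X'| := by
    intro Q X X' hQ hXK hXρ hXK' hXρ'
    have h1 := hRlip ε Q X X' hερ (hQρ Q hQ) hXρ hXρ'
    have h2 : ε^2 + Q^2 + X^2 + X'^2 ≤ (2 + 2*K₀^2) * t^10 := by
      have e1 : ε^2 = t^12 := by rw [← ht6]; ring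
      have e2 : Q^2 ≤ η^2*t^10 := by
        have := pow_le_pow_left₀ (abs_nonneg Q) hQ 2
        rw [sq_abs] at this; linarith only [this]
      have e3 : X^2 ≤ K₀^2 * t^10 := by
        have := pow_le_pow_left₀ (abs_nonneg X) hXK 2
        rw [sq_abs] at this; linarith only [this]
      have e4 : X'^2 ≤ K₀^2 * t^10 := by
        have := pow_le_pow_left₀ (abs_nonneg X') hXK' 2
        rw [sq_abs] at this; linarith only [this]
      have e5 : η^2 ≤ 1 := by rw [sq]; exact mul_le_one₀ hη1 hη.le hη1
      have e6 : η^2*t^10 ≤ t^10 := by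
        calc η^2*t^10 ≤ 1*t^10 := mul_le_mul_of_nonneg_right e5 (pow_pos ht 10).le
          _ = t^10 := one_mul _
      linarith only [e1, e2, e3, e4, e6, hp1210]
    have h3 : M * ((2 + 2*K₀^2)*t^10) ≤ (c*A/2)*t^6 := by
      have h4 : t^4 ≤ c*A/(2*L) := (htk 4 (by norm_num)).trans htc4
      rw [le_div_iff₀ (by positivity), hLdef] at h4
      linarith only [mul_le_mul_of_nonneg_right h4 (pow_pos ht 6).le]
    calc |R ε Q X - R ε Q X'| ≤ M * (ε^2 + Q^2 + X^2 + X'^2) * |X - X'| := h1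
      _ ≤ (c*A/2) * t^6 * |X - X'| := by
        linarith only [
          mul_le_mul_of_nonneg_right (mul_le_mul_of_nonneg_left h2 hM.le) (abs_nonneg (X - X')),
          mul_le_mul_of_nonneg_right h3 (abs_nonneg (X - X'))]
  -- continuity of the defining equation in X
  have hgcont : ∀ Q : ℝ, |Q| ≤ η*t^5 →
      ContinuousOn (fun X : ℝ => a*ε^2 - c*X^2 + b*Q^2 + R ε Q X)
        (Icc (Real.sqrt ((a/c)*ε^2 + (b/c)*Q^2) - η*t^9)
             (Real.sqrt ((a/c)*ε^2 + (b/c)*Q^2) + η*t^9)) := by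
    intro Q hQ
    have hmap : MapsTo (fun X : ℝ => ((ε, Q, X) : ℝ × ℝ × ℝ))
        (Icc (Real.sqrt ((a/c)*ε^2 + (b/c)*Q^2) - η*t^9)
             (Real.sqrt ((a/c)*ε^2 + (b/c)*Q^2) + η*t^9))
        (Icc (-ρ) ρ ×ˢ Icc (-ρ) ρ ×ˢ Icc (-ρ) ρ) := by
      intro X hXmem
      rw [mem_Icc] at hXmem
      have hX : |X - Real.sqrt ((a/c)*ε^2 + (b/c)*Q^2)| ≤ η*t^9 :=
        abs_le.mpr ⟨by linarith only [hXmem.1], by linarith only [hXmem.2]⟩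
      obtain ⟨_, _, hXρ⟩ := hXbound Q X hQ hX
      obtain ⟨he1, he2⟩ := abs_le.mp hερ
      obtain ⟨hq1, hq2⟩ := abs_le.mp (hQρ Q hQ)
      obtain ⟨hx1, hx2⟩ := abs_le.mp hXρ
      simp only [mem_prod, mem_Icc]
      exact ⟨⟨he1, he2⟩, ⟨hq1, hq2⟩, hx1, hx2⟩
    have hinner : Continuous (fun X : ℝ => ((ε, Q, X) : ℝ × ℝ × ℝ)) :=
      continuous_const.prodMk (continuous_const.prodMk continuous_id)
    have hcR : ContinuousOn (fun X : ℝ => R ε Q X)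
        (Icc (Real.sqrt ((a/c)*ε^2 + (b/c)*Q^2) - η*t^9)
             (Real.sqrt ((a/c)*ε^2 + (b/c)*Q^2) + η*t^9)) :=
      hRcont.comp hinner.continuousOn hmap
    have hpoly : Continuous (fun X : ℝ => a*ε^2 - c*X^2 + b*Q^2) :=
      (continuous_const.sub (continuous_const.mul (continuous_pow 2))).add continuous_const
    exact hpoly.continuousOn.add hcR
  -- existence via the intermediate value theorem
  have hexists : ∀ Q : ℝ, |Q| ≤ η*t^5 → ∃ X : ℝ,
      |X - Real.sqrt ((a/c)*ε^2 + (b/c)*Q^2)| ≤ η*t^9 ∧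
      a*ε^2 - c*X^2 + b*Q^2 + R ε Q X = 0 := by
    intro Q hQ
    have hδ : 0 < η*t^9 := by positivity
    have hslb := hs_lb Q
    have hssq := hs_sq Q
    have hRp : |R ε Q (Real.sqrt ((a/c)*ε^2 + (b/c)*Q^2) + η*t^9)| ≤ c*A*η*t^15 :=
      hRsmall Q _ hQ (by
        rw [show Real.sqrt ((a/c)*ε^2 + (b/c)*Q^2) + η*t^9
            - Real.sqrt ((a/c)*ε^2 + (b/c)*Q^2) = η*t^9 by ring]
        exact le_of_eq (abs_of_pos hδ))
    have hRm : |R ε Q (Real.sqrt ((a/c)*ε^2 + (b/c)*Q^2) - η*t^9)| ≤ c*A*η*t^15 :=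
      hRsmall Q _ hQ (by
        rw [show Real.sqrt ((a/c)*ε^2 + (b/c)*Q^2) - η*t^9
            - Real.sqrt ((a/c)*ε^2 + (b/c)*Q^2) = -(η*t^9) by ring, abs_neg]
        exact le_of_eq (abs_of_pos hδ))
    obtain ⟨hRp1, hRp2⟩ := abs_le.mp hRp
    obtain ⟨hRm1, hRm2⟩ := abs_le.mp hRm
    have key : c*A*η*t^15 ≤ c*(Real.sqrt ((a/c)*ε^2 + (b/c)*Q^2))*(η*t^9) := by
      calc c*A*η*t^15 = (c*(A*t^6))*(η*t^9) := by ring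
        _ ≤ (c*(Real.sqrt ((a/c)*ε^2 + (b/c)*Q^2)))*(η*t^9) :=
            mul_le_mul_of_nonneg_right (mul_le_mul_of_nonneg_left hslb hc.le) hδ.le
    have hub : a*ε^2 - c*(Real.sqrt ((a/c)*ε^2 + (b/c)*Q^2) + η*t^9)^2 + b*Q^2
        + R ε Q (Real.sqrt ((a/c)*ε^2 + (b/c)*Q^2) + η*t^9) ≤ 0 := by
      linarith only [hssq, key, hRp2, mul_nonneg hc.le (sq_nonneg (η*t^9)),
        mul_pos (mul_pos (mul_pos hc hA) hη) (pow_pos ht 15)]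
    have hδ2 : c*(η*t^9)^2 ≤ c*((A/2)*(η*t^15)) := by
      calc c*(η*t^9)^2 = c*((η*t^3)*(η*t^15)) := by ring
        _ ≤ c*((A/2)*(η*t^15)) := by
            apply mul_le_mul_of_nonneg_left _ hc.le
            exact mul_le_mul_of_nonneg_right hηt3 (by positivity)
    have hpos15 : (0:ℝ) ≤ c*((A/2)*(η*t^15)) := by positivity
    have hlb : 0 ≤ a*ε^2 - c*(Real.sqrt ((a/c)*ε^2 + (b/c)*Q^2) - η*t^9)^2 + b*Q^2
        + R ε Q (Real.sqrt ((a/c)*ε^2 + (b/c)*Q^2) - η*t^9) := by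
      linarith only [hssq, key, hRm1, hδ2, hpos15,
        mul_pos (mul_pos (mul_pos hc hA) hη) (pow_pos ht 15)]
    have hle : Real.sqrt ((a/c)*ε^2 + (b/c)*Q^2) - η*t^9
        ≤ Real.sqrt ((a/c)*ε^2 + (b/c)*Q^2) + η*t^9 := by linarith only [hδ]
    obtain ⟨X, hXmem, hgX⟩ := intermediate_value_Icc' hle (hgcont Q hQ) ⟨hub, hlb⟩
    rw [mem_Icc] at hXmem
    exact ⟨X, abs_le.mpr ⟨by linarith only [hXmem.1], by linarith only [hXmem.2]⟩, hgX⟩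
  -- uniqueness
  have huniq : ∀ Q X X' : ℝ, |Q| ≤ η*t^5 →
      a*ε^2 - c*X^2 + b*Q^2 + R ε Q X = 0 →
      |X - Real.sqrt ((a/c)*ε^2 + (b/c)*Q^2)| ≤ η*t^9 →
      a*ε^2 - c*X'^2 + b*Q^2 + R ε Q X' = 0 →
      |X' - Real.sqrt ((a/c)*ε^2 + (b/c)*Q^2)| ≤ η*t^9 → X = X' := by
    intro Q X X' hQ hgX hX hgX' hX'
    obtain ⟨hXl, hXK, hXρ⟩ := hXbound Q X hQ hX
    obtain ⟨hXl', hXK', hXρ'⟩ := hXbound Q X' hQ hX'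
    have hlip := hRlipS Q X X' hQ hXK hXρ hXK' hXρ'
    have hE : c*(X^2 - X'^2) = R ε Q X - R ε Q X' := by linarith only [hgX, hgX']
    have hsum : A*t^6 ≤ X + X' := by linarith only [hXl, hXl']
    have hsumpos : 0 < c*(X+X') :=
      mul_pos hc (lt_of_lt_of_le (by positivity) hsum)
    have h1 : c*(X + X') * |X - X'| = |R ε Q X - R ε Q X'| := by
      rw [← hE, show c*(X^2 - X'^2) = (c*(X+X')) * (X - X') by ring, abs_mul,
        abs_of_pos hsumpos]
    have h2 : c*A*t^6*|X-X'| ≤ (c*A/2)*t^6*|X-X'| := by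
      have hAt : c*(A*t^6) ≤ c*(X+X') := mul_le_mul_of_nonneg_left hsum hc.le
      calc c*A*t^6*|X-X'| = (c*(A*t^6))*|X-X'| := by ring
        _ ≤ c*(X+X')*|X-X'| := mul_le_mul_of_nonneg_right hAt (abs_nonneg _)
        _ = |R ε Q X - R ε Q X'| := h1
        _ ≤ (c*A/2)*t^6*|X-X'| := hlip
    have h3 : |X - X'| ≤ 0 := by
      by_contra hcon
      push_neg at hcon
      have := mul_pos (show (0:ℝ) < (c*A/2)*t^6 by positivity) hcon
      linarith only [h2, this]
    have h4 : X - X' = 0 := abs_eq_zero.mp (le_antisymm h3 (abs_nonneg _))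
    linarith only [h4]
  choose sol hsol1 hsol2 using hexists
  refine ⟨fun Q => if h : |Q| ≤ η*t^5 then sol Q h else 0, ?_, ?_⟩
  · -- continuity
    rw [h56, Metric.continuousOn_iff]
    intro Q₀ hQ₀mem e he
    rw [mem_Icc] at hQ₀mem
    have hQ₀ : |Q₀| ≤ η*t^5 := abs_le.mpr hQ₀mem
    have hK : IsCompact ((Icc (-ρ) ρ : Set ℝ) ×ˢ ((Icc (-ρ) ρ : Set ℝ) ×ˢ (Icc (-ρ) ρ : Set ℝ))) :=
      isCompact_Icc.prod (isCompact_Icc.prod isCompact_Icc)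
    have hUC := hK.uniformContinuousOn_of_continuous hRcont
    rw [Metric.uniformContinuousOn_iff] at hUC
    obtain ⟨d₂, hd₂, hUCd⟩ := hUC ((c*A/4)*t^6*e) (by positivity)
    obtain ⟨d₁, hd₁def⟩ : ∃ d₁ : ℝ, d₁ = (c*A*t^6*e)/(8*b*η*t^5+1) := ⟨_, rfl⟩
    have hd₁ : 0 < d₁ := by rw [hd₁def]; positivity
    refine ⟨min d₂ d₁, lt_min hd₂ hd₁, ?_⟩
    intro Q hQmem hdist
    rw [mem_Icc] at hQmem
    have hQ : |Q| ≤ η*t^5 := abs_le.mpr hQmem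
    simp only [dif_pos hQ, dif_pos hQ₀, Real.dist_eq]
    have hgX := hsol2 Q hQ
    have hbX := hsol1 Q hQ
    have hgX' := hsol2 Q₀ hQ₀
    have hbX' := hsol1 Q₀ hQ₀
    obtain ⟨hXl, hXK, hXρ⟩ := hXbound Q (sol Q hQ) hQ hbX
    obtain ⟨hXl', hXK', hXρ'⟩ := hXbound Q₀ (sol Q₀ hQ₀) hQ₀ hbX'
    have hlip := hRlipS Q (sol Q hQ) (sol Q₀ hQ₀) hQ hXK hXρ hXK' hXρ'
    obtain ⟨he1, he2⟩ := abs_le.mp hερ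
    obtain ⟨hq1, hq2⟩ := abs_le.mp (hQρ Q hQ)
    obtain ⟨hq1', hq2'⟩ := abs_le.mp (hQρ Q₀ hQ₀)
    obtain ⟨hx1', hx2'⟩ := abs_le.mp hXρ'
    have hmem1 : ((ε, Q, sol Q₀ hQ₀) : ℝ × ℝ × ℝ)
        ∈ (Icc (-ρ) ρ ×ˢ Icc (-ρ) ρ ×ˢ Icc (-ρ) ρ) := by
      simp only [mem_prod, mem_Icc]
      exact ⟨⟨he1, he2⟩, ⟨hq1, hq2⟩, hx1', hx2'⟩
    have hmem2 : ((ε, Q₀, sol Q₀ hQ₀) : ℝ × ℝ × ℝ)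
        ∈ (Icc (-ρ) ρ ×ˢ Icc (-ρ) ρ ×ˢ Icc (-ρ) ρ) := by
      simp only [mem_prod, mem_Icc]
      exact ⟨⟨he1, he2⟩, ⟨hq1', hq2'⟩, hx1', hx2'⟩
    have hdd : dist ((ε, Q, sol Q₀ hQ₀) : ℝ × ℝ × ℝ) ((ε, Q₀, sol Q₀ hQ₀) : ℝ × ℝ × ℝ)
        = dist Q Q₀ := by
      rw [Prod.dist_eq, Prod.dist_eq, dist_self, dist_self,
        max_eq_left dist_nonneg, max_eq_right dist_nonneg]
    have hΔR : |R ε Q (sol Q₀ hQ₀) - R ε Q₀ (sol Q₀ hQ₀)| < (c*A/4)*t^6*e := by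
      have := hUCd _ hmem1 _ hmem2
        (by rw [hdd]; exact lt_of_lt_of_le hdist (min_le_left _ _))
      simpa [Real.dist_eq] using this
    have hE : c*((sol Q hQ)^2 - (sol Q₀ hQ₀)^2)
        = b*(Q^2 - Q₀^2) + (R ε Q (sol Q hQ) - R ε Q₀ (sol Q₀ hQ₀)) := by
      linarith only [hgX, hgX']
    have hsum : A*t^6 ≤ sol Q hQ + sol Q₀ hQ₀ := by linarith only [hXl, hXl']
    have hsumpos : 0 < c*(sol Q hQ + sol Q₀ hQ₀) :=
      mul_pos hc (lt_of_lt_of_le (by positivity) hsum)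
    have habs1 : c*A*t^6*|sol Q hQ - sol Q₀ hQ₀|
        ≤ |c*((sol Q hQ)^2 - (sol Q₀ hQ₀)^2)| := by
      rw [show c*((sol Q hQ)^2 - (sol Q₀ hQ₀)^2)
          = (c*(sol Q hQ + sol Q₀ hQ₀)) * (sol Q hQ - sol Q₀ hQ₀) by ring, abs_mul,
        abs_of_pos hsumpos]
      have hAt : c*(A*t^6) ≤ c*(sol Q hQ + sol Q₀ hQ₀) :=
        mul_le_mul_of_nonneg_left hsum hc.le
      calc c*A*t^6*|sol Q hQ - sol Q₀ hQ₀|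
          = (c*(A*t^6))*|sol Q hQ - sol Q₀ hQ₀| := by ring
        _ ≤ _ := mul_le_mul_of_nonneg_right hAt (abs_nonneg _)
    have habs2 : |c*((sol Q hQ)^2 - (sol Q₀ hQ₀)^2)|
        ≤ |b*(Q^2 - Q₀^2)| + |R ε Q (sol Q hQ) - R ε Q (sol Q₀ hQ₀)|
          + |R ε Q (sol Q₀ hQ₀) - R ε Q₀ (sol Q₀ hQ₀)| := by
      rw [hE, show b*(Q^2-Q₀^2) + (R ε Q (sol Q hQ) - R ε Q₀ (sol Q₀ hQ₀))
          = b*(Q^2-Q₀^2) + (R ε Q (sol Q hQ) - R ε Q (sol Q₀ hQ₀))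
            + (R ε Q (sol Q₀ hQ₀) - R ε Q₀ (sol Q₀ hQ₀)) by ring]
      exact abs_add_three _ _ _
    have hQterm : |b*(Q^2 - Q₀^2)| ≤ b*(2*(η*t^5))*|Q - Q₀| := by
      rw [show b*(Q^2-Q₀^2) = (b*(Q+Q₀))*(Q-Q₀) by ring, abs_mul]
      apply mul_le_mul_of_nonneg_right _ (abs_nonneg _)
      rw [abs_mul, abs_of_pos hb]
      have hqq : |Q+Q₀| ≤ 2*(η*t^5) := (abs_add_le Q Q₀).trans (by linarith only [hQ, hQ₀])
      exact mul_le_mul_of_nonneg_left hqq hb.le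
    have hQd : |Q - Q₀| ≤ d₁ := by
      have hh := hdist
      rw [Real.dist_eq] at hh
      exact (hh.trans_le (min_le_right _ _)).le
    have hQQ : |b*(Q^2-Q₀^2)| ≤ b*(2*(η*t^5))*d₁ :=
      hQterm.trans (mul_le_mul_of_nonneg_left hQd (by positivity))
    have hd₁bound : b*(2*(η*t^5))*d₁ ≤ (c*A/4)*t^6*e := by
      have h8 : (0:ℝ) < 8*b*η*t^5+1 := by positivity
      have hmul : d₁ * (8*b*η*t^5+1) = c*A*t^6*e := by
        rw [hd₁def]; field_simp
      linarith only [hmul, hd₁.le]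
    have hfin : (c*A/2)*t^6*|sol Q hQ - sol Q₀ hQ₀| < (c*A/2)*t^6*e := by
      linarith only [habs1, habs2, hQQ, hlip, hΔR, hd₁bound]
    exact (mul_lt_mul_iff_right₀ (show (0:ℝ) < (c*A/2)*t^6 by positivity)).mp hfin
  · -- properties
    intro Q hQ'
    rw [h56] at hQ'
    refine ⟨⟨?_, ?_⟩, ?_⟩
    · simp only [dif_pos hQ']
      exact hsol2 Q hQ'
    · simp only [dif_pos hQ']
      rw [h32]
      exact hsol1 Q hQ'
    · intro X hgX hX
      rw [h32] at hX
      simp only [dif_pos hQ']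
      exact huniq Q X (sol Q hQ') hQ' hgX hX (hsol2 Q hQ') (hsol1 Q hQ')

/-- Separation of the perturbed hyperbola branches: if
`ψ̂(ε,Q,X) = a ε² − c̃ X² + b̃ Q² + R(ε,Q,X)` with `R` continuous near `0`, of cubic
order at the origin and locally Lipschitz in `X` with quadratically small constant,
then for small `ε > 0` and `|Q| ≤ η ε^{5/6}` the equation `ψ̂ = 0` has exactly two
solutions `X_±(Q)` within distance `η ε^{3/2}` of `±√((a/c̃)ε² + (b̃/c̃)Q²)`, depending
continuously on `Q` and separated by at least `C ε`. -/
theorem perturbed_hyperbola_separation (a c b M : ℝ)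
    (ha : 0 < a) (hc : 0 < c) (hb : 0 < b) (hM : 0 < M)
    (R : ℝ → ℝ → ℝ → ℝ) (ρ : ℝ) (hρ : 0 < ρ)
    (hRcont : ContinuousOn (fun p : ℝ × ℝ × ℝ => R p.1 p.2.1 p.2.2)
      (Icc (-ρ) ρ ×ˢ Icc (-ρ) ρ ×ˢ Icc (-ρ) ρ))
    (hRbound : ∀ ε Q X : ℝ, |ε| ≤ ρ → |Q| ≤ ρ → |X| ≤ ρ →
      |R ε Q X| ≤ M * (|ε| + |Q| + |X|) ^ 3)
    (hRlip : ∀ ε Q X X' : ℝ, |ε| ≤ ρ → |Q| ≤ ρ → |X| ≤ ρ → |X'| ≤ ρ →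
      |R ε Q X - R ε Q X'| ≤ M * (ε ^ 2 + Q ^ 2 + X ^ 2 + X' ^ 2) * |X - X'|) :
    ∃ C η ε₀ : ℝ, 0 < C ∧ 0 < η ∧ 0 < ε₀ ∧
      ∀ ε : ℝ, 0 < ε → ε ≤ ε₀ →
        ∃ Xp Xm : ℝ → ℝ,
          ContinuousOn Xp (Icc (-(η * ε ^ ((5:ℝ)/6))) (η * ε ^ ((5:ℝ)/6))) ∧
          ContinuousOn Xm (Icc (-(η * ε ^ ((5:ℝ)/6))) (η * ε ^ ((5:ℝ)/6))) ∧
          ∀ Q : ℝ, |Q| ≤ η * ε ^ ((5:ℝ)/6) →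
            (a * ε ^ 2 - c * (Xp Q) ^ 2 + b * Q ^ 2 + R ε Q (Xp Q) = 0 ∧
             |Xp Q - Real.sqrt ((a / c) * ε ^ 2 + (b / c) * Q ^ 2)| ≤ η * ε ^ ((3:ℝ)/2)) ∧
            (a * ε ^ 2 - c * (Xm Q) ^ 2 + b * Q ^ 2 + R ε Q (Xm Q) = 0 ∧
             |Xm Q + Real.sqrt ((a / c) * ε ^ 2 + (b / c) * Q ^ 2)| ≤ η * ε ^ ((3:ℝ)/2)) ∧
            (∀ X : ℝ, a * ε ^ 2 - c * X ^ 2 + b * Q ^ 2 + R ε Q X = 0 →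
              (|X - Real.sqrt ((a / c) * ε ^ 2 + (b / c) * Q ^ 2)| ≤ η * ε ^ ((3:ℝ)/2) →
                X = Xp Q) ∧
              (|X + Real.sqrt ((a / c) * ε ^ 2 + (b / c) * Q ^ 2)| ≤ η * ε ^ ((3:ℝ)/2) →
                X = Xm Q)) ∧
            C * ε ≤ Xp Q - Xm Q := by
  
  obtain ⟨η₁, hη₁, H₁⟩ := core_branch a c b M ha hc hb hM R ρ hρ hRcont hRbound hRlip
  have hRcont' : ContinuousOn (fun p : ℝ × ℝ × ℝ => R p.1 p.2.1 (-p.2.2))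
      (Icc (-ρ) ρ ×ˢ Icc (-ρ) ρ ×ˢ Icc (-ρ) ρ) := by
    have hφ : Continuous (fun p : ℝ × ℝ × ℝ => ((p.1, p.2.1, -p.2.2) : ℝ × ℝ × ℝ)) := by
      fun_prop
    apply hRcont.comp hφ.continuousOn
    intro p hp
    simp only [mem_prod, mem_Icc] at hp ⊢
    exact ⟨hp.1, hp.2.1, by linarith [hp.2.2.2], by linarith [hp.2.2.1]⟩
  have hRbound' : ∀ ε Q X : ℝ, |ε| ≤ ρ → |Q| ≤ ρ → |X| ≤ ρ →
      |R ε Q (-X)| ≤ M * (|ε| + |Q| + |X|) ^ 3 := by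
    intro ε Q X h1 h2 h3
    have h := hRbound ε Q (-X) h1 h2 (by rwa [abs_neg])
    rwa [abs_neg] at h
  have hRlip' : ∀ ε Q X X' : ℝ, |ε| ≤ ρ → |Q| ≤ ρ → |X| ≤ ρ → |X'| ≤ ρ →
      |R ε Q (-X) - R ε Q (-X')| ≤ M * (ε ^ 2 + Q ^ 2 + X ^ 2 + X' ^ 2) * |X - X'| := by
    intro ε Q X X' h1 h2 h3 h4
    have h := hRlip ε Q (-X) (-X') h1 h2 (by rwa [abs_neg]) (by rwa [abs_neg])
    rw [show (-X)^2 = X^2 by ring, show (-X')^2 = X'^2 by ring,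
      show -X - -X' = -(X - X') by ring, abs_neg] at h
    exact h
  obtain ⟨η₂, hη₂, H₂⟩ := core_branch a c b M ha hc hb hM (fun ε Q X => R ε Q (-X)) ρ hρ
    hRcont' hRbound' hRlip'
  have hηpos : 0 < min η₁ η₂ := lt_min hη₁ hη₂
  obtain ⟨ε₁, hε₁, G₁⟩ := H₁ (min η₁ η₂) hηpos (min_le_left _ _)
  obtain ⟨ε₂, hε₂, G₂⟩ := H₂ (min η₁ η₂) hηpos (min_le_right _ _)
  have hC : 0 < Real.sqrt (a/c) := Real.sqrt_pos.mpr (by positivity)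
  refine ⟨Real.sqrt (a/c), min η₁ η₂,
    min ε₁ (min ε₂ ((Real.sqrt (a/c)/(2*min η₁ η₂))^2)),
    hC, hηpos, lt_min hε₁ (lt_min hε₂ (by positivity)), ?_⟩
  intro ε hε hεle
  obtain ⟨Xp, hXpc, hXp⟩ := G₁ ε hε (hεle.trans (min_le_left _ _))
  obtain ⟨Xm', hXmc', hXm'⟩ := G₂ ε hε
    (hεle.trans ((min_le_right _ _).trans (min_le_left _ _)))
  have hsep0 : (min η₁ η₂) * ε ^ ((3:ℝ)/2) ≤ (Real.sqrt (a/c)/2) * ε := by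
    have hε2 : ε ≤ (Real.sqrt (a/c)/(2*min η₁ η₂))^2 :=
      hεle.trans ((min_le_right _ _).trans (min_le_right _ _))
    have hhalf : ε ^ ((1:ℝ)/2) ≤ Real.sqrt (a/c)/(2*min η₁ η₂) := by
      calc ε ^ ((1:ℝ)/2) ≤ ((Real.sqrt (a/c)/(2*min η₁ η₂))^2) ^ ((1:ℝ)/2) :=
            Real.rpow_le_rpow hε.le hε2 (by norm_num)
        _ = Real.sqrt (a/c)/(2*min η₁ η₂) := by
            rw [← Real.rpow_natCast (Real.sqrt (a/c)/(2*min η₁ η₂)) 2,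
              ← Real.rpow_mul (by positivity)]
            norm_num
    have h32 : ε ^ ((3:ℝ)/2) = ε * ε ^ ((1:ℝ)/2) := by
      rw [show (3:ℝ)/2 = 1 + 1/2 by norm_num, Real.rpow_add hε, Real.rpow_one]
    calc (min η₁ η₂) * ε ^ ((3:ℝ)/2) = ((min η₁ η₂)*ε) * ε ^ ((1:ℝ)/2) := by
          rw [h32]; ring
      _ ≤ ((min η₁ η₂)*ε) * (Real.sqrt (a/c)/(2*min η₁ η₂)) :=
          mul_le_mul_of_nonneg_left hhalf (by positivity)
      _ = (Real.sqrt (a/c)/2) * ε := by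
          field_simp
  have hsC : ∀ Q : ℝ, Real.sqrt (a/c) * ε ≤ Real.sqrt ((a/c)*ε^2 + (b/c)*Q^2) := by
    intro Q
    have h1 : Real.sqrt (a/c) * ε = Real.sqrt ((a/c)*ε^2) := by
      rw [Real.sqrt_mul (by positivity : (0:ℝ) ≤ a/c) (ε^2), Real.sqrt_sq hε.le]
    rw [h1]
    exact Real.sqrt_le_sqrt (le_add_of_nonneg_right (by positivity))
  refine ⟨Xp, fun Q => -(Xm' Q), hXpc, hXmc'.neg, ?_⟩
  intro Q hQ
  obtain ⟨⟨heq1, hb1⟩, hu1⟩ := hXp Q hQ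
  obtain ⟨⟨heq2, hb2⟩, hu2⟩ := hXm' Q hQ
  refine ⟨⟨heq1, hb1⟩, ⟨?_, ?_⟩, ?_, ?_⟩
  · show a*ε^2 - c*(-(Xm' Q))^2 + b*Q^2 + R ε Q (-(Xm' Q)) = 0
    calc a*ε^2 - c*(-(Xm' Q))^2 + b*Q^2 + R ε Q (-(Xm' Q))
        = a*ε^2 - c*(Xm' Q)^2 + b*Q^2 + R ε Q (-(Xm' Q)) := by ring
      _ = 0 := heq2
  · show |-(Xm' Q) + Real.sqrt ((a/c)*ε^2 + (b/c)*Q^2)| ≤ _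
    rw [show -(Xm' Q) + Real.sqrt ((a/c)*ε^2 + (b/c)*Q^2)
        = -(Xm' Q - Real.sqrt ((a/c)*ε^2 + (b/c)*Q^2)) by ring, abs_neg]
    exact hb2
  · intro X hgX
    constructor
    · intro hX
      exact hu1 X hgX hX
    · intro hX
      have hgX' : a*ε^2 - c*(-X)^2 + b*Q^2 + R ε Q (-(-X)) = 0 := by
        rw [neg_neg]
        calc a*ε^2 - c*(-X)^2 + b*Q^2 + R ε Q X
            = a*ε^2 - c*X^2 + b*Q^2 + R ε Q X := by ring
          _ = 0 := hgX
      have hbX' : |(-X) - Real.sqrt ((a/c)*ε^2 + (b/c)*Q^2)|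
          ≤ (min η₁ η₂) * ε ^ ((3:ℝ)/2) := by
        rw [show -X - Real.sqrt ((a/c)*ε^2 + (b/c)*Q^2)
            = -(X + Real.sqrt ((a/c)*ε^2 + (b/c)*Q^2)) by ring, abs_neg]
        exact hX
      have hXm := hu2 (-X) hgX' hbX'
      show X = -(Xm' Q)
      linarith only [hXm]
  · obtain ⟨l1, r1⟩ := abs_le.mp hb1
    obtain ⟨l2, r2⟩ := abs_le.mp hb2
    have hs := hsC Q
    show Real.sqrt (a/c) * ε ≤ Xp Q - -(Xm' Q)
    linarith only [l1, l2, hs, hsep0]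
end

section
/- Let Q ∈ (0,1), α(w) = w + Q/w, and v(w) = w⁵/(1 − Q w²) for w on the unit circle 𝕋. Then for every w ∈ 𝕋, (1/(2πi)) ∮_𝕋 (conj(v(τ)) − conj(v(w)))/(α(τ) − α(w)) · α'(τ) dτ = −v(1/w). -/
/-!
On the unit circle `conj τ = τ⁻¹`, so the integrand is a rational function of `u = τ⁻¹`. In that
variable the factor `τ - w` of the numerator cancels against
`α τ - α w = (τ - w) (1 - Q / (τ w))`, and the only remaining pole, `u = w / Q`, lies outside the
closed unit disc; the removable singularity at `τ = w` is a single point of the circle and does not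
change the integral. Since `τ ↦ τ⁻¹` preserves circle averages over the unit circle, the integral
is the circle average of a function holomorphic on the closed disc, which by the mean value
property is its value at `u = 0`, namely `-v w⁻¹`.
-/

open MeasureTheory Real Complex

open Metric Filter ComplexConjugate

section Field

variable {K : Type*} [Field K]

/-- The integrand of `contour_integral_conj_v` as a function of `u = τ⁻¹`
(see `integrand_eq_inversionKernel_inv`). -/
def inversionKernel (Q w u : K) : K :=
  -(1 + w * u + w ^ 2 * u ^ 2 + w ^ 3 * u ^ 3 + w ^ 4 * u ^ 4 -
      Q * u ^ 2 * (1 + w * u + w ^ 2 * u ^ 2)) / ((w - Q * u) * w ^ 2 * (w ^ 2 - Q))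

theorem inv_pow_five_div_one_sub_mul_inv_sq {Q z : K} (hz : z ≠ 0) (hzQ : z ^ 2 ≠ Q) :
    z⁻¹ ^ 5 / (1 - Q * z⁻¹ ^ 2) = 1 / (z ^ 3 * (z ^ 2 - Q)) := by
  have : z ^ 2 - Q ≠ 0 := sub_ne_zero.2 hzQ
  field_simp

theorem inversionKernel_inv {Q w τ : K} (hτ : τ ≠ 0) (hw : w ≠ 0) (hτw : τ ≠ w)
    (hτQ : τ ^ 2 ≠ Q) (hwQ : w ^ 2 ≠ Q) (hτwQ : τ * w ≠ Q) :
    (τ⁻¹ ^ 5 / (1 - Q * τ⁻¹ ^ 2) - w⁻¹ ^ 5 / (1 - Q * w⁻¹ ^ 2)) /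
        (τ + Q / τ - (w + Q / w)) * (1 - Q / τ ^ 2) * τ = inversionKernel Q w τ⁻¹ := by
  have hτQ' : τ ^ 2 - Q ≠ 0 := sub_ne_zero.2 hτQ
  have hwQ' : w ^ 2 - Q ≠ 0 := sub_ne_zero.2 hwQ
  have hτw' : τ - w ≠ 0 := sub_ne_zero.2 hτw
  have hτwQ' : w - Q * τ⁻¹ ≠ 0 := by
    rw [show w - Q * τ⁻¹ = (τ * w - Q) / τ by field_simp]
    exact div_ne_zero (sub_ne_zero.2 hτwQ) hτ
  have hα : τ + Q / τ - (w + Q / w) = (τ - w) * (τ * w - Q) / (τ * w) := by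
    field_simp; ring
  rw [hα, inv_pow_five_div_one_sub_mul_inv_sq hτ hτQ, inv_pow_five_div_one_sub_mul_inv_sq hw hwQ,
    inversionKernel]
  field_simp
  ring

theorem inversionKernel_zero {Q w : K} (hw : w ≠ 0) (hwQ : w ^ 2 ≠ Q) :
    inversionKernel Q w 0 = -(w⁻¹ ^ 5 / (1 - Q * w⁻¹ ^ 2)) := by
  have : w ^ 2 - Q ≠ 0 := sub_ne_zero.2 hwQ
  rw [inv_pow_five_div_one_sub_mul_inv_sq hw hwQ]
  norm_num [inversionKernel]
  field_simp

end Field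

theorem ne_of_norm_eq_one_of_norm_lt_one {z Q : ℂ} (hz : ‖z‖ = 1) (hQ : ‖Q‖ < 1) : z ≠ Q := by
  rintro rfl; linarith

theorem differentiableOn_inversionKernel {Q w : ℂ} (hQ : ‖Q‖ < 1) (hw : ‖w‖ = 1) :
    DifferentiableOn ℂ (inversionKernel Q w) (closedBall 0 1) := by
  intro u hu
  have hQu : w - Q * u ≠ 0 := by
    refine sub_ne_zero.2 (ne_of_norm_eq_one_of_norm_lt_one hw ?_)
    rw [norm_mul]
    exact lt_of_le_of_lt (mul_le_of_le_one_right (norm_nonneg _) (by simpa using hu)) hQ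
  have hw0 : w ≠ 0 := norm_ne_zero_iff.1 (by simp [hw])
  have hwQ : w ^ 2 - Q ≠ 0 :=
    sub_ne_zero.2 (ne_of_norm_eq_one_of_norm_lt_one (by simp [hw]) hQ)
  unfold inversionKernel
  apply DifferentiableAt.differentiableWithinAt
  fun_prop (disch := simp [hQu, hw0, hwQ])

theorem deriv_add_const_div {c z : ℂ} (hz : z ≠ 0) :
    deriv (fun z => z + c / z) z = 1 - c / z ^ 2 := by
  have h : HasDerivAt (fun z => z + c / z) (1 + c * -(z ^ 2)⁻¹) z := by
    simpa only [div_eq_mul_inv] using (hasDerivAt_id' z).fun_add ((hasDerivAt_inv hz).const_mul c)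
  rw [h.deriv]
  ring

theorem circleAverage_zero_one_eq_integral_exp (f : ℂ → ℂ) :
    circleAverage f 0 1 = 1 / (2 * (π : ℂ)) * ∫ θ in (0:ℝ)..2 * π, f (exp (I * θ)) := by
  simp [circleAverage_def, circleMap, mul_comm]

theorem integrand_eq_inversionKernel_inv {Q : ℝ} (hQ : |Q| < 1) {w τ : ℂ} (hw : ‖w‖ = 1)
    (hτ : ‖τ‖ = 1) (hτw : τ ≠ w) :
    (conj (τ ^ 5 / (1 - Q * τ ^ 2)) - conj (w ^ 5 / (1 - Q * w ^ 2))) /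
        (τ + Q / τ - (w + Q / w)) * deriv (fun z => z + (Q : ℂ) / z) τ * τ =
      inversionKernel (Q : ℂ) w τ⁻¹ := by
  have hQ' : ‖(Q : ℂ)‖ < 1 := by rwa [norm_real, Real.norm_eq_abs]
  have hτ0 : τ ≠ 0 := norm_ne_zero_iff.1 (by simp [hτ])
  have hw0 : w ≠ 0 := norm_ne_zero_iff.1 (by simp [hw])
  have hsq {z : ℂ} (hz : ‖z‖ = 1) : z ^ 2 ≠ Q :=
    ne_of_norm_eq_one_of_norm_lt_one (by simp [hz]) hQ'
  simp only [map_div₀, map_sub, map_mul, map_pow, map_one, conj_ofReal, ← inv_eq_conj hτ,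
    ← inv_eq_conj hw, deriv_add_const_div hτ0]
  exact inversionKernel_inv hτ0 hw0 hτw (hsq hτ) (hsq hw)
    (ne_of_norm_eq_one_of_norm_lt_one (by simp [hτ, hw]) hQ')

/-- For `Q ∈ (0,1)`, `α(w) = w + Q/w` and `v(w) = w⁵/(1 − Q w²)`, for every `w` on the
unit circle,
`(1/(2πi)) ∮_𝕋 (conj(v(τ)) − conj(v(w)))/(α(τ) − α(w)) · α'(τ) dτ = −v(1/w)`. -/
theorem contour_integral_conj_v (Q : ℝ) (hQ : Q ∈ Set.Ioo (0:ℝ) 1)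
    (w : ℂ) (hw : ‖w‖ = 1) :
    let α : ℂ → ℂ := fun z => z + (Q : ℂ) / z
    let v : ℂ → ℂ := fun z => z ^ 5 / (1 - (Q : ℂ) * z ^ 2)
    (1 / (2 * (Real.pi : ℂ))) *
        ∫ θ in (0:ℝ)..(2 * Real.pi),
          (((starRingEnd ℂ) (v (Complex.exp (Complex.I * θ))) - (starRingEnd ℂ) (v w)) /
              (α (Complex.exp (Complex.I * θ)) - α w)) *
            deriv α (Complex.exp (Complex.I * θ)) * Complex.exp (Complex.I * θ) =
      -v w⁻¹ := by
  intro α v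
  have hQ' : |Q| < 1 := abs_lt.2 ⟨by linarith [hQ.1], hQ.2⟩
  have hQc : ‖(Q : ℂ)‖ < 1 := by rwa [norm_real, Real.norm_eq_abs]
  rw [← circleAverage_zero_one_eq_integral_exp
    (fun τ => (conj (v τ) - conj (v w)) / (α τ - α w) * deriv α τ * τ)]
  calc _ = circleAverage (inversionKernel (Q : ℂ) w ·⁻¹) 0 1 := by
        refine circleAverage_congr_codiscreteWithin ?_ one_ne_zero
        filter_upwards [compl_singleton_mem_codiscreteWithin w, self_mem_codiscreteWithin _]
          with τ hτw hτ
        exact integrand_eq_inversionKernel_inv hQ' hw (by simpa using hτ) hτw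
    _ = circleAverage (inversionKernel (Q : ℂ) w) 0 1 := circleAverage_zero_one_congr_inv
    _ = inversionKernel (Q : ℂ) w 0 :=
        ((differentiableOn_inversionKernel hQc hw).diffContOnCl_ball (by simp)).circleAverage
    _ = -v w⁻¹ := inversionKernel_zero (norm_ne_zero_iff.1 (by simp [hw]))
        (ne_of_norm_eq_one_of_norm_lt_one (by simp [hw]) hQc)
end
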